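/- For every n ≥ 0 the following hold in Δ_q: B_{nδ+α₀} = (−1)^n q^{−n} A·U_n(C) + (−1)^n q^{−n−1} B·U_{n−1}(C) + (−1)^n α·∑_{j≥0} q^{2j−n+1} U_{n−2j−2}(C) + (−1)^{n−1} β·∑_{j≥0} q^{2j−n} U_{n−2j−1}(C), and B_{nδ+α₁} = (−1)^n q^{n} B·U_n(C) + (−1)^n q^{n+1} A·U_{n−1}(C) + (−1)^n β·∑_{j≥0} q^{n−2j−1} U_{n−2j−2}(C) + (−1)^{n−1} α·∑_{j≥0} q^{n−2j} U_{n−2j−1}(C). (All sums are finite since U_m = 0 for m < 0.) -/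

import Mathlib

noncomputable section

variable (F : Type) [Field F] (q : F)

/-- Element `A + (qBC - q⁻¹CB)/(q² - q⁻²)` of the free algebra on generators A, B, C. -/
def eA : FreeAlgebra F (Fin 3) :=
  FreeAlgebra.ι F 0 + (q ^ 2 - q⁻¹ ^ 2)⁻¹ •
    (q • (FreeAlgebra.ι F 1 * FreeAlgebra.ι F 2) - q⁻¹ • (FreeAlgebra.ι F 2 * FreeAlgebra.ι F 1))

/-- Element `B + (qCA - q⁻¹AC)/(q² - q⁻²)` of the free algebra on generators A, B, C. -/
def eB : FreeAlgebra F (Fin 3) :=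
  FreeAlgebra.ι F 1 + (q ^ 2 - q⁻¹ ^ 2)⁻¹ •
    (q • (FreeAlgebra.ι F 2 * FreeAlgebra.ι F 0) - q⁻¹ • (FreeAlgebra.ι F 0 * FreeAlgebra.ι F 2))

/-- Element `C + (qAB - q⁻¹BA)/(q² - q⁻²)` of the free algebra on generators A, B, C. -/
def eC : FreeAlgebra F (Fin 3) :=
  FreeAlgebra.ι F 2 + (q ^ 2 - q⁻¹ ^ 2)⁻¹ •
    (q • (FreeAlgebra.ι F 0 * FreeAlgebra.ι F 1) - q⁻¹ • (FreeAlgebra.ι F 1 * FreeAlgebra.ι F 0))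

/-- Defining relations of the universal Askey–Wilson algebra: each of the three elements
`eA`, `eB`, `eC` commutes with each generator. -/
inductive AWRel : FreeAlgebra F (Fin 3) → FreeAlgebra F (Fin 3) → Prop
  | commA (i : Fin 3) : AWRel (eA F q * FreeAlgebra.ι F i) (FreeAlgebra.ι F i * eA F q)
  | commB (i : Fin 3) : AWRel (eB F q * FreeAlgebra.ι F i) (FreeAlgebra.ι F i * eB F q)
  | commC (i : Fin 3) : AWRel (eC F q * FreeAlgebra.ι F i) (FreeAlgebra.ι F i * eC F q)

/-- The universal Askey–Wilson algebra Δ_q. -/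
abbrev AW := RingQuot (AWRel F q)

/-- The generator A of Δ_q. -/
def Agen : AW F q := RingQuot.mkAlgHom F (AWRel F q) (FreeAlgebra.ι F 0)
/-- The generator B of Δ_q. -/
def Bgen : AW F q := RingQuot.mkAlgHom F (AWRel F q) (FreeAlgebra.ι F 1)
/-- The generator C of Δ_q. -/
def Cgen : AW F q := RingQuot.mkAlgHom F (AWRel F q) (FreeAlgebra.ι F 2)

/-- The central element α of Δ_q. -/
def αel : AW F q := (q + q⁻¹) • RingQuot.mkAlgHom F (AWRel F q) (eA F q)
/-- The central element β of Δ_q. -/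
def βel : AW F q := (q + q⁻¹) • RingQuot.mkAlgHom F (AWRel F q) (eB F q)
/-- The central element γ of Δ_q. -/
def γel : AW F q := (q + q⁻¹) • RingQuot.mkAlgHom F (AWRel F q) (eC F q)

/-- The elements `B_{nδ+α₀}` of Δ_q, defined by `B_{0δ+α₀} = A`,
`B_{δ+α₀} = B + [C,A]/(q−q⁻¹)`, `B_{nδ+α₀} = B_{(n−2)δ+α₀} + [C,B_{(n−1)δ+α₀}]/(q−q⁻¹)`. -/
def Bnd0 : ℕ → AW F q
  | 0 => Agen F q
  | 1 => Bgen F q + (q - q⁻¹)⁻¹ • (Cgen F q * Agen F q - Agen F q * Cgen F q)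
  | n + 2 => Bnd0 n + (q - q⁻¹)⁻¹ •
      (Cgen F q * Bnd0 (n + 1) - Bnd0 (n + 1) * Cgen F q)

/-- The elements `B_{nδ+α₁}` of Δ_q, defined by `B_{0δ+α₁} = B`,
`B_{δ+α₁} = A − [C,B]/(q−q⁻¹)`, `B_{nδ+α₁} = B_{(n−2)δ+α₁} − [C,B_{(n−1)δ+α₁}]/(q−q⁻¹)`. -/
def Bnd1 : ℕ → AW F q
  | 0 => Bgen F q
  | 1 => Agen F q - (q - q⁻¹)⁻¹ • (Cgen F q * Bgen F q - Bgen F q * Cgen F q)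
  | n + 2 => Bnd1 n - (q - q⁻¹)⁻¹ •
      (Cgen F q * Bnd1 (n + 1) - Bnd1 (n + 1) * Cgen F q)

/-- Monic Chebyshev polynomials of the second kind, indexed by ℕ:
`U_0 = 1`, `U_1 = x`, `U_{n+2} = x·U_{n+1} - U_n`. -/
def Uc : ℕ → Polynomial F
  | 0 => 1
  | 1 => Polynomial.X
  | n + 2 => Polynomial.X * Uc (n + 1) - Uc n

/-- Monic Chebyshev polynomials of the second kind, indexed by ℤ (zero for negative index). -/
def U (n : ℤ) : Polynomial F := if 0 ≤ n then Uc F n.toNat else 0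

/-- `U_m(C)`: the image in Δ_q of the Chebyshev polynomial `U_m` under evaluation at `C`. -/
def UC (m : ℤ) : AW F q := Polynomial.aeval (Cgen F q) (U F m)

/-!
Both families satisfy `x_{n+2} = x_n + [c, x_{n+1}]/(q - q⁻¹)` in an algebra where `[c, a]` is a
combination of `β`, `a c`, `b` and `[c, b]` one of `α`, `b c`, `a`, with `α`, `β` commuting with
`c`: `B_{nδ+α₀}` is the instance `(q, A, B)`, and since these relations are invariant under
`(q, a, b, α, β) ↦ (q⁻¹, b, a, β, α)`, `B_{nδ+α₁}` is the instance `(q⁻¹, B, A)`.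
On elements `a p(c) + b r(c) + α s(c) + β t(c)` the commutator with `c` acts `F[X]`-linearly on
`(p, r, s, t)`, so the closed form reduces to recursions between polynomials, which follow from
`X U_m = U_{m+1} + U_{m-1}` and from splitting the first term off each sum.
-/

open Polynomial Function

lemma finsum_eq_zero_add_finsum_succ {M : Type*} [AddCommMonoid M] (f : ℕ → M) (N : ℕ)
    (hf : support f ⊆ Finset.range N) : ∑ᶠ j, f j = f 0 + ∑ᶠ j, f (j + 1) := by
  have hsucc : support (fun j => f (j + 1)) ⊆ Finset.range N := fun j hj => by
    have := hf hj
    simp only [Finset.coe_range, Set.mem_Iio] at this ⊢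
    omega
  have hN : f N = 0 := notMem_support.mp fun h => by simpa using hf h
  rw [finsum_eq_finsetSum_of_support_subset _ hf, finsum_eq_finsetSum_of_support_subset _ hsucc,
    ← add_zero (∑ i ∈ Finset.range N, f i), ← hN, ← Finset.sum_range_succ,
    Finset.sum_range_succ', add_comm]

section Chebyshev
variable {F}

lemma U_of_neg {m : ℤ} (hm : m < 0) : U F m = 0 := if_neg (not_le.mpr hm)

lemma U_natCast (k : ℕ) : U F k = Uc F k := by simp [U]

lemma U_zero : U F 0 = 1 := U_natCast 0

lemma U_one : U F 1 = X := U_natCast 1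

lemma X_mul_U {m : ℤ} (hm : 0 ≤ m) : X * U F m = U F (m + 1) + U F (m - 1) := by
  lift m to ℕ using hm
  cases m with
  | zero => simp [U_zero, U_one, U_of_neg]
  | succ k =>
    have h : U F (k + 2) = X * U F (k + 1) - U F k := by
      exact_mod_cast (rfl : Uc F (k + 2) = X * Uc F (k + 1) - Uc F k)
    push_cast
    rw [add_assoc, one_add_one_eq_two, add_sub_cancel_right, h, sub_add_cancel]

def chebTail (x : F) (m : ℤ) : F[X] :=
  ∑ᶠ j : ℕ, x ^ (2 * (j : ℤ) - m - 1) • U F (m - 2 * j)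

lemma support_smul_U_subset (g : ℕ → F) (m : ℤ) :
    support (fun j : ℕ => g j • U F (m - 2 * j)) ⊆ Finset.range (m.toNat + 1) := by
  intro j hj
  simp only [Finset.coe_range, Set.mem_Iio]
  by_contra h
  exact hj (by simp only [U_of_neg (show m - 2 * j < 0 by omega), smul_zero])

lemma chebTail_of_neg (x : F) {m : ℤ} (hm : m < 0) : chebTail x m = 0 :=
  finsum_eq_zero_of_forall_eq_zero fun j => by rw [U_of_neg (by omega), smul_zero]

lemma chebTail_eq_add (x : F) (m : ℤ) :
    chebTail x m = x ^ (-m - 1) • U F m + chebTail x (m - 2) := by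
  rw [chebTail, finsum_eq_zero_add_finsum_succ _ _ (support_smul_U_subset _ m), chebTail]
  congr 1
  · simp
  · refine finsum_congr fun j => ?_
    push_cast
    ring_nf

end Chebyshev

section Coefficients
variable {F}

def coeffA (n : ℕ) : F[X] := ((-1) ^ n * q ^ (-(n : ℤ))) • U F n

def coeffB (n : ℕ) : F[X] := ((-1) ^ n * q ^ (-(n : ℤ) - 1)) • U F (n - 1)

def coeffAlpha (n : ℕ) : F[X] := (-1 : F) ^ n • chebTail q (n - 2)

def coeffBeta (n : ℕ) : F[X] := -((-1 : F) ^ n • chebTail q (n - 1))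

variable {q}

lemma coeffA_add_two (hq : q ≠ 0) (n : ℕ) :
    coeffA q (n + 2) = coeffA q n +
      (((q + q⁻¹) * q) • coeffB q (n + 1) - q⁻¹ • (X * coeffA q (n + 1))) := by
  have hX : X * U F (n + 1) = U F (n + 2) + U F n := by
    rw [X_mul_U (by positivity), add_assoc, one_add_one_eq_two, add_sub_cancel_right]
  simp only [coeffA, coeffB, mul_smul_comm, Nat.cast_add, Nat.cast_one, Nat.cast_ofNat,
    add_sub_cancel_right, hX]
  match_scalars <;>
    simp only [pow_succ, neg_add, zpow_add₀ hq, zpow_sub₀ hq, zpow_neg, zpow_natCast] <;>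
    field_simp
  ring

lemma coeffB_add_two (hq : q ≠ 0) (n : ℕ) :
    coeffB q (n + 2) = coeffB q n +
      (q • (X * coeffB q (n + 1)) - ((q + q⁻¹) * q⁻¹) • coeffA q (n + 1)) := by
  simp only [coeffA, coeffB, mul_smul_comm, Nat.cast_add, Nat.cast_one, Nat.cast_ofNat,
    add_sub_cancel_right, X_mul_U (m := n) (Int.natCast_nonneg n),
    show (n : ℤ) + 2 - 1 = n + 1 by ring]
  match_scalars <;>
    simp only [pow_succ, neg_add, zpow_add₀ hq, zpow_sub₀ hq, zpow_neg, zpow_natCast] <;>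
    field_simp <;> ring

lemma coeffAlpha_add_two (hq : q ≠ 0) (n : ℕ) :
    coeffAlpha q (n + 2) = coeffAlpha q n + -(q • coeffB q (n + 1)) := by
  simp only [coeffAlpha, coeffB, Nat.cast_add, Nat.cast_one, Nat.cast_ofNat,
    add_sub_cancel_right, chebTail_eq_add q n]
  match_scalars <;>
    simp only [pow_succ, neg_add, zpow_add₀ hq, zpow_sub₀ hq, zpow_neg, zpow_natCast] <;>
    field_simp

lemma coeffBeta_add_two (hq : q ≠ 0) (n : ℕ) :
    coeffBeta q (n + 2) = coeffBeta q n + q⁻¹ • coeffA q (n + 1) := by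
  simp only [coeffBeta, coeffA, Nat.cast_add, Nat.cast_one, Nat.cast_ofNat,
    show (n : ℤ) + 2 - 1 = n + 1 by ring, chebTail_eq_add q (n + 1),
    show (n : ℤ) + 1 - 2 = n - 1 by ring]
  match_scalars <;>
    simp only [pow_succ, neg_add, zpow_add₀ hq, zpow_sub₀ hq, zpow_neg, zpow_natCast] <;>
    field_simp

end Coefficients

section Algebra
variable {F q} {R : Type*} [Ring R] [Algebra F R] {a b c α β : R}

lemma commute_aeval_self (p : F[X]) : Commute c (aeval c p) := by
  simpa using (commute_X p).map (aeval c)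

lemma commutator_mul_aeval (x : R) (p : F[X]) :
    c * (x * aeval c p) - x * aeval c p * c = (c * x - x * c) * aeval c p := by
  rw [sub_mul, mul_assoc, mul_assoc, mul_assoc, (commute_aeval_self p).eq]

/-- In `Δ_q` these are the definitions of `β` and `α`, solved for `[C, A]` and `[C, B]`. -/
structure CommutatorRelations (q : F) (a b c α β : R) : Prop where
  comm_ca : c * a - a * c = (q - q⁻¹) • q⁻¹ • (β - a * c - (q + q⁻¹) • b)
  comm_cb : c * b - b * c = (q - q⁻¹) • q • (b * c + (q + q⁻¹) • a - α)
  commute_α : Commute c α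
  commute_β : Commute c β

lemma CommutatorRelations.inv (h : CommutatorRelations q a b c α β) :
    CommutatorRelations q⁻¹ b a c β α where
  comm_ca := by rw [inv_inv, h.comm_cb]; module
  comm_cb := by rw [inv_inv, h.comm_ca]; module
  commute_α := h.commute_β
  commute_β := h.commute_α

def coeffForm (a b c α β : R) (p r s t : F[X]) : R :=
  a * aeval c p + b * aeval c r + α * aeval c s + β * aeval c t

lemma coeffForm_add (a b c α β : R) (p r s t p' r' s' t' : F[X]) :
    coeffForm a b c α β p r s t + coeffForm a b c α β p' r' s' t' =
      coeffForm a b c α β (p + p') (r + r') (s + s') (t + t') := by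
  simp only [coeffForm, map_add, mul_add]
  abel

lemma commutator_coeffForm (h : CommutatorRelations q a b c α β) (p r s t : F[X]) :
    c * coeffForm a b c α β p r s t - coeffForm a b c α β p r s t * c =
      (q - q⁻¹) • coeffForm a b c α β
        (((q + q⁻¹) * q) • r - q⁻¹ • (X * p))
        (q • (X * r) - ((q + q⁻¹) * q⁻¹) • p)
        (-(q • r)) (q⁻¹ • p) := by
  have hcentral : ∀ (z : R) (u : F[X]), Commute c z →
      c * (z * aeval c u) - z * aeval c u * c = 0 :=
    fun z u hz => sub_eq_zero.mpr (hz.mul_right (commute_aeval_self u)).eq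
  simp only [coeffForm, mul_add, add_mul, add_sub_add_comm, commutator_mul_aeval, h.comm_ca,
    h.comm_cb, hcentral α s h.commute_α, hcentral β t h.commute_β]
  simp only [map_sub, map_smul, map_mul, map_neg, aeval_X, smul_mul_assoc, mul_smul_comm,
    mul_neg, mul_sub, sub_mul, add_mul, mul_assoc]
  module

variable (q) in
def commutatorSeq (a b c : R) : ℕ → R
  | 0 => a
  | 1 => b + (q - q⁻¹)⁻¹ • (c * a - a * c)
  | n + 2 => commutatorSeq a b c n +
      (q - q⁻¹)⁻¹ • (c * commutatorSeq a b c (n + 1) - commutatorSeq a b c (n + 1) * c)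

theorem commutatorSeq_eq_coeffForm (hq : q - q⁻¹ ≠ 0) (h : CommutatorRelations q a b c α β)
    (n : ℕ) :
    commutatorSeq q a b c n =
      coeffForm a b c α β (coeffA q n) (coeffB q n) (coeffAlpha q n) (coeffBeta q n) := by
  have hq0 : q ≠ 0 := by rintro rfl; simp at hq
  induction n using Nat.twoStepInduction with
  | zero =>
    simp [commutatorSeq, coeffForm, coeffA, coeffB, coeffAlpha, coeffBeta, U_zero, U_of_neg,
      chebTail_of_neg]
  | one =>
    have hA : coeffA q 1 = -q⁻¹ • X := by simp [coeffA, U_one]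
    have hB : coeffB q 1 = -(q ^ 2)⁻¹ • 1 := by simp [coeffB, U_zero]
    have hAlpha : coeffAlpha q 1 = 0 := by simp [coeffAlpha, chebTail_of_neg]
    have hBeta : coeffBeta q 1 = q⁻¹ • 1 := by
      simp [coeffBeta, chebTail_eq_add q 0, chebTail_of_neg, U_zero]
    rw [commutatorSeq, h.comm_ca, smul_smul, inv_mul_cancel₀ hq, one_smul, coeffForm, hA, hB,
      hAlpha, hBeta]
    simp only [map_smul, map_one, map_zero, aeval_X, mul_smul_comm, mul_one, mul_zero, add_zero]
    match_scalars <;> field_simp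
    ring
  | more n ih ih' =>
    rw [commutatorSeq, ih, ih', commutator_coeffForm h, smul_smul,
      inv_mul_cancel₀ hq, one_smul, coeffForm_add, coeffA_add_two hq0, coeffB_add_two hq0,
      coeffAlpha_add_two hq0, coeffBeta_add_two hq0]

lemma aeval_smul_chebTail (x y : F) (m : ℤ) :
    aeval c (y • chebTail x m) =
      y • ∑ᶠ j : ℕ, x ^ (2 * (j : ℤ) - m - 1) • aeval c (U F (m - 2 * j)) := by
  rw [map_smul, chebTail,
    map_finsum _ ((Finset.range _).finite_toSet.subset (support_smul_U_subset _ m))]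
  simp only [map_smul]

theorem commutatorSeq_closed_form (hq : q - q⁻¹ ≠ 0) (h : CommutatorRelations q a b c α β)
    (n : ℕ) :
    commutatorSeq q a b c n =
      ((-1 : F) ^ n * q ^ (-(n : ℤ))) • (a * aeval c (U F n)) +
      ((-1 : F) ^ n * q ^ (-(n : ℤ) - 1)) • (b * aeval c (U F (n - 1))) +
      (-1 : F) ^ n •
        (α * ∑ᶠ j : ℕ, q ^ (2 * (j : ℤ) - n + 1) • aeval c (U F (n - 2 * j - 2))) +
      (-1 : F) ^ ((n : ℤ) - 1) •
        (β * ∑ᶠ j : ℕ, q ^ (2 * (j : ℤ) - n) • aeval c (U F (n - 2 * j - 1))) := by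
  have hsign : (-1 : F) ^ ((n : ℤ) - 1) = -(-1) ^ n := by
    rw [zpow_sub_one₀ (by norm_num), zpow_natCast, inv_neg_one, mul_neg_one]
  rw [commutatorSeq_eq_coeffForm hq h, coeffForm, coeffA, coeffB, coeffAlpha,
    coeffBeta, ← neg_smul, aeval_smul_chebTail, aeval_smul_chebTail, map_smul, map_smul,
    mul_smul_comm, mul_smul_comm, mul_smul_comm, mul_smul_comm, hsign]
  congr 4
  · exact finsum_congr fun j =>
      congrArg₂ (fun e m => q ^ e • aeval c (U F m)) (by ring) (by ring)
  · exact funext fun j =>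
      congrArg₂ (fun e m => q ^ e • aeval c (U F m)) (by ring) (by ring)

theorem commutatorSeq_inv_closed_form (hq : q - q⁻¹ ≠ 0)
    (h : CommutatorRelations q a b c α β) (n : ℕ) :
    commutatorSeq q⁻¹ b a c n =
      ((-1 : F) ^ n * q ^ (n : ℤ)) • (b * aeval c (U F n)) +
      ((-1 : F) ^ n * q ^ ((n : ℤ) + 1)) • (a * aeval c (U F (n - 1))) +
      (-1 : F) ^ n •
        (β * ∑ᶠ j : ℕ, q ^ ((n : ℤ) - 2 * j - 1) • aeval c (U F (n - 2 * j - 2))) +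
      (-1 : F) ^ ((n : ℤ) - 1) •
        (α * ∑ᶠ j : ℕ, q ^ ((n : ℤ) - 2 * j) • aeval c (U F (n - 2 * j - 1))) := by
  have hq' : q⁻¹ - q⁻¹⁻¹ ≠ 0 := by rw [inv_inv, ← neg_sub]; exact neg_ne_zero.mpr hq
  rw [commutatorSeq_closed_form hq' h.inv]
  simp only [inv_zpow', neg_neg]
  congr 4
  · rw [neg_sub, sub_neg_eq_add, add_comm]
  · exact finsum_congr fun j =>
      congrArg₂ (fun e m => q ^ e • aeval c (U F m)) (by ring) rfl
  · exact funext fun j =>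
      congrArg₂ (fun e m => q ^ e • aeval c (U F m)) (by ring) rfl

end Algebra

section AskeyWilson

variable {F q}

lemma sub_inv_ne_zero (hq : q ≠ 0) (h2 : q ^ 2 ≠ 1) : q - q⁻¹ ≠ 0 := by
  rw [sub_ne_zero]
  intro h
  field_simp at h
  exact h2 h

theorem commutatorRelations_AW (hq : q ≠ 0) (h4 : q ^ 4 ≠ 1) :
    CommutatorRelations q (Agen F q) (Bgen F q) (Cgen F q) (αel F q) (βel F q) where
  comm_ca := by
    simp only [βel, eB, Agen, Bgen, Cgen, map_add, map_smul, map_sub, map_mul]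
    match_scalars <;> field_simp <;> ring
  comm_cb := by
    simp only [αel, eA, Agen, Bgen, Cgen, map_add, map_smul, map_sub, map_mul]
    match_scalars <;> field_simp <;> ring
  commute_α := by
    rw [Commute, SemiconjBy, αel, Cgen, mul_smul_comm, smul_mul_assoc, ← map_mul, ← map_mul,
      RingQuot.mkAlgHom_rel F (AWRel.commA 2)]
  commute_β := by
    rw [Commute, SemiconjBy, βel, Cgen, mul_smul_comm, smul_mul_assoc, ← map_mul, ← map_mul,
      RingQuot.mkAlgHom_rel F (AWRel.commB 2)]

lemma Bnd0_eq_commutatorSeq (n : ℕ) :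
    Bnd0 F q n = commutatorSeq q (Agen F q) (Bgen F q) (Cgen F q) n := by
  induction n using Nat.twoStepInduction with
  | zero => rfl
  | one => rfl
  | more n ih ih' => rw [Bnd0, commutatorSeq, ih, ih']

lemma Bnd1_eq_commutatorSeq_inv (n : ℕ) :
    Bnd1 F q n = commutatorSeq q⁻¹ (Bgen F q) (Agen F q) (Cgen F q) n := by
  have hκ : (q⁻¹ - q⁻¹⁻¹)⁻¹ = -(q - q⁻¹)⁻¹ := by
    rw [inv_inv, ← neg_sub, inv_neg]
  induction n using Nat.twoStepInduction with
  | zero => rfl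
  | one => rw [Bnd1, commutatorSeq, hκ]; module
  | more n ih ih' => rw [Bnd1, commutatorSeq, ih, ih', hκ]; module

end AskeyWilson

theorem Bnd_closed_form_general (F : Type) [Field F]
    (q : F) (hq : q ≠ 0) (hq1 : ∀ n : ℕ, n ≠ 0 → q ^ n ≠ 1) (n : ℕ) :
    Bnd0 F q n =
      ((-1 : F) ^ n * q ^ (-(n : ℤ))) • (Agen F q * UC F q (n : ℤ)) +
      ((-1 : F) ^ n * q ^ (-(n : ℤ) - 1)) • (Bgen F q * UC F q ((n : ℤ) - 1)) +
      (-1 : F) ^ n • (αel F q *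
        ∑ᶠ j : ℕ, q ^ (2 * (j : ℤ) - (n : ℤ) + 1) • UC F q ((n : ℤ) - 2 * j - 2)) +
      (-1 : F) ^ ((n : ℤ) - 1) • (βel F q *
        ∑ᶠ j : ℕ, q ^ (2 * (j : ℤ) - (n : ℤ)) • UC F q ((n : ℤ) - 2 * j - 1)) ∧
    Bnd1 F q n =
      ((-1 : F) ^ n * q ^ (n : ℤ)) • (Bgen F q * UC F q (n : ℤ)) +
      ((-1 : F) ^ n * q ^ ((n : ℤ) + 1)) • (Agen F q * UC F q ((n : ℤ) - 1)) +
      (-1 : F) ^ n • (βel F q *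
        ∑ᶠ j : ℕ, q ^ ((n : ℤ) - 2 * j - 1) • UC F q ((n : ℤ) - 2 * j - 2)) +
      (-1 : F) ^ ((n : ℤ) - 1) • (αel F q *
        ∑ᶠ j : ℕ, q ^ ((n : ℤ) - 2 * j) • UC F q ((n : ℤ) - 2 * j - 1)) := by
  have hq2 := sub_inv_ne_zero hq (hq1 2 two_ne_zero)
  have hrel := commutatorRelations_AW hq (hq1 4 four_ne_zero)
  exact ⟨(Bnd0_eq_commutatorSeq n).trans (commutatorSeq_closed_form hq2 hrel n),
    (Bnd1_eq_commutatorSeq_inv n).trans (commutatorSeq_inv_closed_form hq2 hrel n)⟩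

/-- Theorem 5.5 of the paper: closed forms for `B_{nδ+α₀}` and `B_{nδ+α₁}` in Δ_q. -/
theorem Bnd_closed_form (F : Type) [Field F] [IsAlgClosed F] [CharZero F]
    (q : F) (hq : q ≠ 0) (hq1 : ∀ n : ℕ, n ≠ 0 → q ^ n ≠ 1) (n : ℕ) :
    Bnd0 F q n =
      ((-1 : F) ^ n * q ^ (-(n : ℤ))) • (Agen F q * UC F q (n : ℤ)) +
      ((-1 : F) ^ n * q ^ (-(n : ℤ) - 1)) • (Bgen F q * UC F q ((n : ℤ) - 1)) +
      (-1 : F) ^ n • (αel F q *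
        ∑ᶠ j : ℕ, q ^ (2 * (j : ℤ) - (n : ℤ) + 1) • UC F q ((n : ℤ) - 2 * j - 2)) +
      (-1 : F) ^ ((n : ℤ) - 1) • (βel F q *
        ∑ᶠ j : ℕ, q ^ (2 * (j : ℤ) - (n : ℤ)) • UC F q ((n : ℤ) - 2 * j - 1)) ∧
    Bnd1 F q n =
      ((-1 : F) ^ n * q ^ (n : ℤ)) • (Bgen F q * UC F q (n : ℤ)) +
      ((-1 : F) ^ n * q ^ ((n : ℤ) + 1)) • (Agen F q * UC F q ((n : ℤ) - 1)) +
      (-1 : F) ^ n • (βel F q *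
        ∑ᶠ j : ℕ, q ^ ((n : ℤ) - 2 * j - 1) • UC F q ((n : ℤ) - 2 * j - 2)) +
      (-1 : F) ^ ((n : ℤ) - 1) • (αel F q *
        ∑ᶠ j : ℕ, q ^ ((n : ℤ) - 2 * j) • UC F q ((n : ℤ) - 2 * j - 1)) :=
  Bnd_closed_form_general F q hq hq1 n
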